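/- arXiv:1909.12877 — 6 statements merged into one kernel-verified Lean document; each statement's English description precedes it below -/
import Mathlib

section
/- In a finite unrooted tree with exactly 2n leaves (n ≥ 1), the minimum number of leaf-to-leaf paths needed so that every vertex of the tree lies on at least one path is exactly n. -/
/-!
A leaf can only be an endpoint of a path, so `n` traversals are needed to reach all `2n`
leaves. Conversely, pair up the leaves so that the total distance between partners is maximal.
If some vertex `z` were on none of the `n` paths, take leaves `ℓ₁ ≠ ℓ₂` with `z` between them
(the ends of a longest geodesic through `z`), paired with `m₁, m₂`. Since `z` is neither between
`ℓ₁, m₁` nor between `ℓ₂, m₂`, it is between `m₁` and `m₂`, and by the strict triangle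
inequalities the re-pairing `{ℓ₁, ℓ₂}, {m₁, m₂}` has larger total distance.
-/

open Finset

namespace SimpleGraph

variable {V : Type*} {G : SimpleGraph V}

def IsBetween (G : SimpleGraph V) (x y z : V) : Prop :=
  G.dist x y + G.dist y z = G.dist x z

theorem IsBetween.symm {x y z : V} (h : G.IsBetween x y z) : G.IsBetween z y x := by
  unfold IsBetween at h ⊢
  rw [G.dist_comm (u := z) (v := y), G.dist_comm (u := y) (v := x),
    G.dist_comm (u := z) (v := x)]
  omega

theorem Connected.exists_isPath_mem_support_of_isBetween (hG : G.Connected) {x y z : V}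
    (h : G.IsBetween x y z) : ∃ p : G.Walk x z, p.IsPath ∧ y ∈ p.support := by
  obtain ⟨q₁, hq₁⟩ := hG.exists_walk_length_eq_dist x y
  obtain ⟨q₂, hq₂⟩ := hG.exists_walk_length_eq_dist y z
  refine ⟨q₁.append q₂, (q₁.append q₂).isPath_of_length_eq_dist ?_, ?_⟩
  · rw [Walk.length_append, hq₁, hq₂]
    exact h
  · exact (Walk.mem_support_append_iff _ _).mpr (Or.inl q₁.end_mem_support)

theorem Connected.isBetween_of_forall_mem_support (hG : G.Connected) {x y z : V}
    (h : ∀ q : G.Walk x z, y ∈ q.support) : G.IsBetween x y z := by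
  classical
  obtain ⟨q, hq⟩ := hG.exists_walk_length_eq_dist x z
  have hsplit := congrArg Walk.length (q.take_spec (h q))
  rw [Walk.length_append, hq] at hsplit
  have := dist_le (q.takeUntil y (h q))
  have := dist_le (q.dropUntil y (h q))
  have := hG.dist_triangle (u := x) (v := y) (w := z)
  unfold IsBetween
  omega

theorem IsTree.isBetween_iff (hG : G.IsTree) {x y z : V} :
    G.IsBetween x y z ↔ ∀ q : G.Walk x z, y ∈ q.support := by
  classical
  refine ⟨fun h q => ?_, hG.connected.isBetween_of_forall_mem_support⟩
  obtain ⟨p, hp, hy⟩ := hG.connected.exists_isPath_mem_support_of_isBetween h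
  have : q.bypass = p := (hG.existsUnique_path x z).unique q.bypass_isPath hp
  exact q.support_bypass_subset_support (this ▸ hy)

theorem IsTree.isBetween_of_isBetween_of_not_isBetween (hG : G.IsTree) {x₁ x₂ y z₁ z₂ : V}
    (h : G.IsBetween x₁ y x₂) (h₁ : ¬G.IsBetween x₁ y z₁) (h₂ : ¬G.IsBetween x₂ y z₂) :
    G.IsBetween z₁ y z₂ := by
  simp only [hG.isBetween_iff, not_forall] at h h₁ h₂ ⊢
  obtain ⟨q₁, hq₁⟩ := h₁
  obtain ⟨q₂, hq₂⟩ := h₂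
  intro q
  have := h (q₁.append (q.append q₂.reverse))
  simp only [Walk.mem_support_append_iff, Walk.support_reverse, List.mem_reverse] at this
  tauto

theorem IsTree.exists_adj_dist_eq_add_one (hG : G.IsTree) {x : V} [Fintype (G.neighborSet x)]
    (hx : 2 ≤ G.degree x) (y : V) : ∃ w, G.Adj x w ∧ G.dist w y = G.dist x y + 1 := by
  obtain ⟨p, hp, hpx⟩ := hG.connected.exists_path_of_dist x y
  have closer_eq_snd : ∀ w, G.Adj x w → G.dist x y = G.dist w y + 1 → w = p.snd := by
    intro w hw hd
    obtain ⟨q, hq⟩ := hG.connected.exists_walk_length_eq_dist w y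
    have hpath : (Walk.cons hw q).IsPath :=
      Walk.isPath_of_length_eq_dist _ (by rw [Walk.length_cons, hq, hd])
    rw [← (hG.existsUnique_path x y).unique hpath hp, Walk.snd_cons]
  obtain ⟨w, hw, hwp⟩ := (G.neighborFinset x).exists_mem_ne
    (by rwa [card_neighborFinset_eq_degree]) p.snd
  rw [mem_neighborFinset] at hw
  refine ⟨w, hw, ?_⟩
  rw [G.dist_comm (u := w), G.dist_comm (u := x)]
  rcases hG.dist_eq_dist_add_one_of_adj y hw with h | h
  · rw [G.dist_comm (u := y), G.dist_comm (u := y)] at h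
    exact absurd (closer_eq_snd w hw h) hwp
  · exact h

theorem IsTree.degree_eq_one_of_forall_isBetween_dist_le [Nontrivial V] (hG : G.IsTree)
    {x y z : V} [Fintype (G.neighborSet x)] (h : G.IsBetween x z y)
    (hmax : ∀ x' y', G.IsBetween x' z y' → G.dist x' y' ≤ G.dist x y) : G.degree x = 1 := by
  by_contra hx
  have := hG.connected.preconnected.degree_pos_of_nontrivial x
  obtain ⟨w, hw, hwy⟩ := hG.exists_adj_dist_eq_add_one (x := x) (by omega) y
  have hwx : G.dist w x = 1 := dist_eq_one_iff_adj.mpr hw.symm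
  have hwzy : G.IsBetween w z y := by
    have := hG.connected.dist_triangle (u := w) (v := x) (w := z)
    have := hG.connected.dist_triangle (u := w) (v := z) (w := y)
    unfold IsBetween at h ⊢
    omega
  have := hmax w y hwzy
  omega

theorem IsTree.exists_isBetween_of_degree_eq_one [Fintype V] [DecidableRel G.Adj]
    [Nontrivial V] (hG : G.IsTree) (z : V) :
    ∃ x y, x ≠ y ∧ G.degree x = 1 ∧ G.degree y = 1 ∧ G.IsBetween x z y := by
  classical
  obtain ⟨⟨x, y⟩, hxy, hmax⟩ :=
    (univ.filter fun q : V × V => G.IsBetween q.1 z q.2).exists_max_image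
    (fun q => G.dist q.1 q.2) ⟨(z, z), mem_filter.mpr ⟨mem_univ _, by simp [IsBetween]⟩⟩
  simp only [mem_filter, mem_univ, true_and, Prod.forall] at hxy hmax
  have hx := hG.degree_eq_one_of_forall_isBetween_dist_le hxy hmax
  have hy := hG.degree_eq_one_of_forall_isBetween_dist_le hxy.symm fun x' y' h => by
    rw [G.dist_comm (u := y), G.dist_comm (u := x')]
    exact hmax y' x' h.symm
  refine ⟨x, y, ?_, hx, hy, hxy⟩
  rintro rfl
  obtain rfl : x = z := by
    unfold IsBetween at hxy
    rw [dist_self] at hxy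
    exact hG.connected.dist_eq_zero_iff.mp (by omega)
  obtain ⟨w, hw, -⟩ := degree_eq_one_iff_existsUnique_adj.mp hx
  have := hmax w x (by simp [IsBetween])
  rw [dist_self, dist_eq_one_iff_adj.mpr hw.symm] at this
  omega

theorem Walk.IsPath.eq_or_eq_of_degree_eq_one {u v w : V} {p : G.Walk u v} (hp : p.IsPath)
    [Fintype (G.neighborSet w)] (hw : w ∈ p.support) (hdeg : G.degree w = 1) :
    w = u ∨ w = v := by
  obtain ⟨i, rfl, hi⟩ := Walk.mem_support_iff_exists_getVert.mp hw
  rcases Nat.eq_zero_or_pos i with rfl | hi₀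
  · exact Or.inl p.getVert_zero
  rcases hi.eq_or_lt with rfl | hlt
  · exact Or.inr p.getVert_length
  obtain ⟨_, -, hunique⟩ := degree_eq_one_iff_existsUnique_adj.mp hdeg
  have hprev : G.Adj (p.getVert i) (p.getVert (i - 1)) := by
    have := p.adj_getVert_succ (i := i - 1) (by omega)
    rw [Nat.sub_add_cancel hi₀] at this
    exact this.symm
  have heq := (hunique _ hprev).trans (hunique _ (p.adj_getVert_succ hlt)).symm
  have := hp.getVert_injOn (by rw [Set.mem_ofPred_eq]; omega) (by rw [Set.mem_ofPred_eq]; omega) heq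
  omega

theorem card_filter_degree_eq_one_le [Fintype V] [DecidableRel G.Adj] {ι : Type*} [Fintype ι]
    {a b : ι → V} (p : ∀ i, G.Walk (a i) (b i)) (hp : ∀ i, (p i).IsPath)
    (hcov : ∀ v, ∃ i, v ∈ (p i).support) :
    (univ.filter fun v => G.degree v = 1).card ≤ 2 * Fintype.card ι := by
  classical
  have hsub : (univ.filter fun v => G.degree v = 1) ⊆ univ.image a ∪ univ.image b := by
    intro v hv
    obtain ⟨i, hi⟩ := hcov v
    rcases (hp i).eq_or_eq_of_degree_eq_one hi (mem_filter.mp hv).2 with rfl | rfl <;> simp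
  calc _ ≤ (univ.image a ∪ univ.image b).card := card_le_card hsub
    _ ≤ (univ.image a).card + (univ.image b).card := card_union_le _ _
    _ ≤ 2 * Fintype.card ι := by
      have := card_image_le (s := univ) (f := a)
      have := card_image_le (s := univ) (f := b)
      rw [card_univ] at *
      omega

section Pairing

variable {ι : Type*}

theorem dist_apply_mk_not (g : ι × Bool → V) (i : ι) (s : Bool) :
    G.dist (g (i, s)) (g (i, !s)) = G.dist (g (i, true)) (g (i, false)) := by
  cases s
  · exact G.dist_comm
  · rfl

theorem isBetween_apply_mk_not_iff (g : ι × Bool → V) (i : ι) (s : Bool) {z : V} :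
    G.IsBetween (g (i, s)) z (g (i, !s)) ↔ G.IsBetween (g (i, true)) z (g (i, false)) := by
  cases s
  · exact ⟨IsBetween.symm, IsBetween.symm⟩
  · rfl

/-- A pairing is encoded as `g : ι × Bool → V`, with pairs `{g (i, true), g (i, false)}`. -/
noncomputable def pairingCost [Fintype ι] (G : SimpleGraph V) (g : ι × Bool → V) : ℕ :=
  ∑ i, G.dist (g (i, true)) (g (i, false))

/-- The swap re-pairs `{g (j₁, s₁), g (j₁, !s₁)}`, `{g (j₂, s₂), g (j₂, !s₂)}` as
`{g (j₁, s₁), g (j₂, s₂)}`, `{g (j₁, !s₁), g (j₂, !s₂)}`. -/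
theorem pairingCost_comp_swap_add [Fintype ι] [DecidableEq ι] (g : ι × Bool → V) {j₁ j₂ : ι}
    (hj : j₁ ≠ j₂) (s₁ s₂ : Bool) :
    pairingCost G (g ∘ Equiv.swap (j₁, !s₁) (j₂, s₂)) + G.dist (g (j₁, s₁)) (g (j₁, !s₁)) +
        G.dist (g (j₂, s₂)) (g (j₂, !s₂)) =
      pairingCost G g + G.dist (g (j₁, s₁)) (g (j₂, s₂)) + G.dist (g (j₁, !s₁)) (g (j₂, !s₂)) := by
  set g' := g ∘ Equiv.swap (j₁, !s₁) (j₂, s₂)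
  have hj₁ : G.dist (g' (j₁, true)) (g' (j₁, false)) = G.dist (g (j₁, s₁)) (g (j₂, s₂)) := by
    rw [← dist_apply_mk_not g' j₁ s₁]
    simp [g', Equiv.swap_apply_of_ne_of_ne, hj]
  have hj₂ : G.dist (g' (j₂, true)) (g' (j₂, false)) = G.dist (g (j₁, !s₁)) (g (j₂, !s₂)) := by
    rw [← dist_apply_mk_not g' j₂ (!s₂), G.dist_comm]
    simp [g', Equiv.swap_apply_of_ne_of_ne, Ne.symm hj]
  have hrest : ∀ i ∈ (univ.erase j₁).erase j₂,
      G.dist (g' (i, true)) (g' (i, false)) = G.dist (g (i, true)) (g (i, false)) := by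
    intro i hi
    simp only [mem_erase] at hi
    simp [g', Equiv.swap_apply_of_ne_of_ne, hi.1, hi.2.1]
  have hsplit : ∀ f : ι → ℕ, ∑ i, f i = f j₁ + f j₂ + ∑ i ∈ (univ.erase j₁).erase j₂, f i := by
    intro f
    rw [add_assoc, add_sum_erase _ _ (mem_erase.mpr ⟨Ne.symm hj, mem_univ _⟩),
      add_sum_erase _ _ (mem_univ _)]
  rw [pairingCost, pairingCost, hsplit, hsplit fun i => G.dist (g (i, true)) (g (i, false)),
    sum_congr rfl hrest, hj₁, hj₂, dist_apply_mk_not g j₁ s₁, dist_apply_mk_not g j₂ s₂]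
  ring

theorem exists_perm_forall_pairingCost_comp_le [Fintype ι] [DecidableEq ι] (g : ι × Bool → V) :
    ∃ σ : Equiv.Perm (ι × Bool), ∀ τ : Equiv.Perm (ι × Bool),
      pairingCost G (g ∘ σ ∘ τ) ≤ pairingCost G (g ∘ σ) := by
  obtain ⟨σ, -, hσ⟩ := univ.exists_max_image
    (fun σ : Equiv.Perm (ι × Bool) => pairingCost G (g ∘ σ)) univ_nonempty
  exact ⟨σ, fun τ => hσ (σ * τ) (mem_univ _)⟩

theorem IsTree.exists_isBetween_pair [Fintype ι] [DecidableEq ι] (hG : G.IsTree) {g : ι × Bool → V}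
    (hmax : ∀ τ : Equiv.Perm (ι × Bool), pairingCost G (g ∘ τ) ≤ pairingCost G g)
    {p₁ p₂ : ι × Bool} {z : V} (hne : g p₁ ≠ g p₂) (hz : G.IsBetween (g p₁) z (g p₂)) :
    ∃ i, G.IsBetween (g (i, true)) z (g (i, false)) := by
  by_contra! hcov
  have hnot : ∀ i s, ¬G.IsBetween (g (i, s)) z (g (i, !s)) := fun i s =>
    (isBetween_apply_mk_not_iff g i s).not.mpr (hcov i)
  obtain ⟨j₁, s₁⟩ := p₁
  obtain ⟨j₂, s₂⟩ := p₂
  by_cases hj : j₁ = j₂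
  · subst hj
    obtain rfl : s₂ = !s₁ := by cases s₁ <;> cases s₂ <;> simp_all
    exact hnot j₁ s₁ hz
  have hm := hG.isBetween_of_isBetween_of_not_isBetween hz (hnot j₁ s₁) (hnot j₂ s₂)
  have := hmax (Equiv.swap (j₁, !s₁) (j₂, s₂))
  have := pairingCost_comp_swap_add (G := G) g hj s₁ s₂
  have := hG.connected.dist_triangle (u := g (j₁, s₁)) (v := z) (w := g (j₁, !s₁))
  have := hG.connected.dist_triangle (u := g (j₂, s₂)) (v := z) (w := g (j₂, !s₂))
  have := G.dist_comm (u := z) (v := g (j₂, s₂))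
  have := G.dist_comm (u := z) (v := g (j₁, !s₁))
  have := hnot j₁ s₁
  have := hnot j₂ s₂
  unfold IsBetween at *
  omega

end Pairing

theorem IsTree.exists_traversal_cover [Fintype V] [DecidableRel G.Adj] (hG : G.IsTree) {n : ℕ}
    (hn : 1 ≤ n) (hleaves : (univ.filter fun v => G.degree v = 1).card = 2 * n) :
    ∃ (a b : Fin n → V) (p : ∀ i, G.Walk (a i) (b i)),
      (∀ i, (p i).IsPath) ∧ (∀ i, G.degree (a i) = 1) ∧ (∀ i, G.degree (b i) = 1) ∧
      (∀ i, a i ≠ b i) ∧ (∀ v : V, ∃ i, v ∈ (p i).support) := by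
  classical
  set L := univ.filter fun v => G.degree v = 1
  have : Nontrivial V := by
    obtain ⟨x, -, y, -, hxy⟩ := one_lt_card.mp (by omega : 1 < L.card)
    exact ⟨x, y, hxy⟩
  let e : Fin n × Bool ≃ L := Fintype.equivOfCardEq (by simp [hleaves, mul_comm])
  obtain ⟨σ, hσ⟩ := exists_perm_forall_pairingCost_comp_le (G := G) (Subtype.val ∘ e)
  set g := Subtype.val ∘ e ∘ σ
  have hleaf : ∀ q, G.degree (g q) = 1 := fun q => (mem_filter.mp (e (σ q)).2).2
  have hinj : Function.Injective g := Subtype.val_injective.comp (e.injective.comp σ.injective)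
  have hsurj : ∀ ℓ, G.degree ℓ = 1 → ∃ q, g q = ℓ := fun ℓ hℓ =>
    ⟨σ.symm (e.symm ⟨ℓ, by simpa [L] using hℓ⟩), by simp [g]⟩
  refine ⟨fun i => g (i, true), fun i => g (i, false), fun i => (hG.connected _ _).some.bypass,
    fun i => Walk.bypass_isPath _, fun i => hleaf _, fun i => hleaf _,
    fun i h => by simpa using hinj h, fun z => ?_⟩
  obtain ⟨ℓ₁, ℓ₂, hne, h₁, h₂, hz⟩ := hG.exists_isBetween_of_degree_eq_one z
  obtain ⟨q₁, rfl⟩ := hsurj ℓ₁ h₁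
  obtain ⟨q₂, rfl⟩ := hsurj ℓ₂ h₂
  obtain ⟨i, hi⟩ := hG.exists_isBetween_pair hσ hne hz
  exact ⟨i, hG.isBetween_iff.mp hi _⟩

end SimpleGraph

theorem min_traversal_cover_of_tree_general {V : Type} [Fintype V]
    (G : SimpleGraph V) [DecidableRel G.Adj] (hT : G.IsTree) (n : ℕ) (hn : 1 ≤ n)
    (hleaves : (Finset.univ.filter fun v => G.degree v = 1).card = 2 * n) :
    IsLeast {k : ℕ | ∃ (a b : Fin k → V) (p : ∀ i, G.Walk (a i) (b i)),
        (∀ i, (p i).IsPath) ∧ (∀ i, G.degree (a i) = 1) ∧ (∀ i, G.degree (b i) = 1) ∧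
        (∀ i, a i ≠ b i) ∧ (∀ v : V, ∃ i, v ∈ (p i).support)} n := by
  refine ⟨hT.exists_traversal_cover hn hleaves, ?_⟩
  rintro k ⟨a, b, p, hp, -, -, -, hcov⟩
  have := SimpleGraph.card_filter_degree_eq_one_le p hp hcov
  rw [hleaves, Fintype.card_fin] at this
  omega

/-- In a finite unrooted tree with exactly `2 * n` leaves (`n ≥ 1`),
the minimum number of leaf-to-leaf paths (traversals) needed so that every vertex of
the tree lies on at least one of the paths is exactly `n`. -/
theorem min_traversal_cover_of_tree {V : Type} [Fintype V] [DecidableEq V]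
    (G : SimpleGraph V) [DecidableRel G.Adj] (hT : G.IsTree) (n : ℕ) (hn : 1 ≤ n)
    (hleaves : (Finset.univ.filter fun v => G.degree v = 1).card = 2 * n) :
    IsLeast {k : ℕ | ∃ (a b : Fin k → V) (p : ∀ i, G.Walk (a i) (b i)),
        (∀ i, (p i).IsPath) ∧ (∀ i, G.degree (a i) = 1) ∧ (∀ i, G.degree (b i) = 1) ∧
        (∀ i, a i ≠ b i) ∧ (∀ v : V, ∃ i, v ∈ (p i).support)} n :=
  min_traversal_cover_of_tree_general G hT n hn hleaves
end

section
/- Let T be a finite unrooted tree with 2n leaves. Then there exists a vertex v of T and a set of n leaf-to-leaf paths, each containing v, whose union covers all vertices of T. -/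
/-!
Choose `v` minimising the total distance to the leaves. Moving from `v` to a neighbour `c`
brings the leaves behind `c` one step closer and moves every other leaf at most one step
away, so minimality leaves at most `n` of the `2n` leaves behind any neighbour of `v`. List
the leaves grouped by the first step of their path from `v` and pair the `i`-th with the
`(i + n)`-th: the two lie behind different neighbours, so their paths from `v` meet only in
`v` and glue to a leaf-to-leaf path through `v`. Every vertex lies on the path from `v` to
some leaf, namely to an endpoint of a longest path from `v` through it.
-/

open Finset SimpleGraph

theorem Finset.exists_equiv_fin_monotone {α β : Type*} [LinearOrder β] {s : Finset α} {m : ℕ}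
    (hs : #s = m) (f : α → β) : ∃ e : Fin m ≃ s, Monotone fun k => f (e k) :=
  let e₀ : Fin m ≃ s := (finCongr hs.symm).trans s.equivFin.symm
  ⟨(Tuple.sort fun k => f (e₀ k)).trans e₀, Tuple.monotone_sort fun k => f (e₀ k)⟩

theorem Finset.exists_pairing_of_card_fiber_le {α β : Type*} [DecidableEq β] (s : Finset α)
    (f : α → β) {n : ℕ} (hs : #s = 2 * n) (hf : ∀ b, #{x ∈ s | f x = b} ≤ n) :
    ∃ a b : Fin n → α, (∀ i, a i ∈ s) ∧ (∀ i, b i ∈ s) ∧ (∀ i, f (a i) ≠ f (b i)) ∧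
      ∀ x ∈ s, ∃ i, x = a i ∨ x = b i := by
  let := IsWellOrder.linearOrder (WellOrderingRel (α := β))
  obtain ⟨e, he⟩ := exists_equiv_fin_monotone hs f
  refine ⟨fun i => e ⟨i, by omega⟩, fun i => e ⟨i + n, by omega⟩, fun i => (e _).2,
    fun i => (e _).2, fun i heq => ?_, fun x hx => ?_⟩
  · -- the `n + 1` consecutive entries `i, …, i + n` would all lie in one fiber
    set lo : Fin (2 * n) := ⟨i, by omega⟩
    set hi : Fin (2 * n) := ⟨i + n, by omega⟩
    have heq : f (e hi) = f (e lo) := heq.symm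
    have hsub : (Icc lo hi).map ⟨fun k => (e k : α), Subtype.val_injective.comp e.injective⟩ ⊆
        {x ∈ s | f x = f (e lo)} := by
      intro x hx
      obtain ⟨k, hk, rfl⟩ := mem_map.mp hx
      rw [mem_Icc] at hk
      exact mem_filter.mpr ⟨(e k).2, le_antisymm ((he hk.2).trans_eq heq) (he hk.1)⟩
    have := (card_le_card hsub).trans (hf _)
    rw [card_map, Fin.card_Icc] at this
    simp only [lo, hi] at this
    omega
  · obtain ⟨k, hk⟩ := e.surjective ⟨x, hx⟩
    have hxk : x = e k := by rw [hk]
    by_cases hkn : (k : ℕ) < n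
    · exact ⟨⟨k, hkn⟩, .inl hxk⟩
    · refine ⟨⟨k - n, by omega⟩, .inr (hxk.trans ?_)⟩
      congr
      ext
      simp only
      omega

namespace SimpleGraph

variable {V : Type*} {G : SimpleGraph V}

namespace IsTree

noncomputable def path (hT : G.IsTree) (u w : V) : G.Walk u w :=
  (hT.existsUnique_path u w).exists.choose

variable (hT : G.IsTree)

lemma isPath_path (u w : V) : (hT.path u w).IsPath :=
  (hT.existsUnique_path u w).exists.choose_spec

lemma eq_path {u w : V} {p : G.Walk u w} (hp : p.IsPath) : p = hT.path u w :=
  (hT.existsUnique_path u w).unique hp (hT.isPath_path u w)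

lemma snd_path_self (u : V) : (hT.path u u).snd = u := by
  rw [← hT.eq_path .nil]
  rfl

lemma snd_path_ne {u w : V} (h : u ≠ w) : (hT.path u w).snd ≠ u :=
  (Walk.adj_snd (Walk.not_nil_of_ne h)).ne.symm

lemma length_path (u w : V) : (hT.path u w).length = G.dist u w := by
  obtain ⟨p, hp⟩ := hT.connected.exists_walk_length_eq_dist u w
  rw [← hT.eq_path (p.isPath_of_length_eq_dist hp), hp]

lemma path_eq_takeUntil [DecidableEq V] {u w z : V} (h : w ∈ (hT.path u z).support) :
    hT.path u w = (hT.path u z).takeUntil w h :=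
  (hT.eq_path ((hT.isPath_path u z).takeUntil h)).symm

lemma snd_path_of_mem_support {u w z : V} (h : w ∈ (hT.path u z).support) (hw : w ≠ u) :
    (hT.path u w).snd = (hT.path u z).snd := by
  classical
  rw [hT.path_eq_takeUntil h, Walk.snd_takeUntil hw]

lemma dist_snd_path_add_one {u w : V} (h : u ≠ w) :
    G.dist (hT.path u w).snd w + 1 = G.dist u w := by
  have hnil : ¬(hT.path u w).Nil := Walk.not_nil_of_ne h
  rw [← hT.length_path, ← hT.length_path, ← hT.eq_path (hT.isPath_path u w).tail,
    Walk.length_tail_add_one hnil]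

lemma isPath_reverse_append_of_snd_ne {v a b : V}
    (h : (hT.path v a).snd ≠ (hT.path v b).snd) :
    ((hT.path v a).reverse.append (hT.path v b)).IsPath := by
  have hb := (hT.isPath_path v b).support_nodup
  rw [← Walk.cons_tail_support] at hb
  rw [Walk.isPath_def, Walk.support_append, Walk.support_reverse]
  refine (List.nodup_reverse.mpr (hT.isPath_path v a).support_nodup).append
    (List.nodup_cons.mp hb).2 fun x hxa hxb => ?_
  have hxv : x ≠ v := by rintro rfl; exact (List.nodup_cons.mp hb).1 hxb
  exact h ((hT.snd_path_of_mem_support (List.mem_reverse.mp hxa) hxv).symm.trans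
    (hT.snd_path_of_mem_support (List.mem_of_mem_tail hxb) hxv))

lemma exists_degree_eq_one_mem_support_path [Fintype V] [DecidableRel G.Adj] [Nontrivial V]
    (v w : V) : ∃ l, G.degree l = 1 ∧ w ∈ (hT.path v l).support := by
  classical
  obtain ⟨z, hz, hmax⟩ := exists_max_image {z | w ∈ (hT.path v z).support}
    (fun z => (hT.path v z).length) ⟨w, by simp⟩
  rw [mem_filter_univ] at hz
  refine ⟨z, ?_, hz⟩
  by_contra hdeg
  -- a neighbour `x` of `z` off the path `v ⋯ z` gives a longer path `v ⋯ z x` through `w`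
  obtain ⟨x, hzx, hx⟩ : ∃ x, G.Adj z x ∧ x ≠ (hT.path v z).penultimate := by
    have := hT.connected.preconnected.degree_pos_of_nontrivial z
    obtain ⟨x, hx, hne⟩ := exists_mem_ne (s := G.neighborFinset z)
      (by rw [card_neighborFinset_eq_degree]; omega) (hT.path v z).penultimate
    exact ⟨x, (mem_neighborFinset ..).mp hx, hne⟩
  have hxp : x ∉ (hT.path v z).support := fun h =>
    hx (hT.isAcyclic.eq_penultimate_of_adj_end (hT.isPath_path v z) hzx h)
  have hzp : z ∈ (hT.path v x).support :=
    hT.isAcyclic.mem_support_of_ne_mem_support_of_adj_of_isPath (hT.isPath_path v x)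
      (hT.isPath_path v z) hzx.symm hxp
  have hwx : w ∈ (hT.path v x).support := by
    rw [hT.path_eq_takeUntil hzp] at hz
    exact Walk.support_takeUntil_subset_support _ hzp hz
  have hlt : (hT.path v z).length < (hT.path v x).length := by
    rw [hT.path_eq_takeUntil hzp]
    exact Walk.length_takeUntil_lt_length hzp hzx.ne
  exact (hmax x ((mem_filter_univ x).mpr hwx)).not_gt hlt

lemma dist_add_ite_snd_path_le [DecidableEq V] {v c : V} (hc : G.Adj v c) (l : V) :
    G.dist c l + (if (hT.path v l).snd = c then 2 else 0) ≤ G.dist v l + 1 := by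
  split_ifs with h
  · have hvl : v ≠ l := by rintro rfl; exact hc.ne ((hT.snd_path_self v).symm.trans h)
    have := hT.dist_snd_path_add_one hvl
    rw [h] at this
    omega
  · have : G.dist c l ≤ G.dist c v + G.dist v l := hT.connected.dist_triangle
    rw [dist_eq_one_iff_adj.mpr hc.symm] at this
    omega

lemma two_mul_card_filter_snd_path_le [DecidableEq V] (L : Finset V) {v c : V} (hcv : c ≠ v)
    (hv : ∑ l ∈ L, G.dist v l ≤ ∑ l ∈ L, G.dist c l) :
    2 * #{l ∈ L | (hT.path v l).snd = c} ≤ #L := by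
  obtain hF | ⟨l₀, hl₀⟩ := eq_empty_or_nonempty {l ∈ L | (hT.path v l).snd = c}
  · simp [hF]
  have hl₀c := (mem_filter.mp hl₀).2
  have hvl₀ : v ≠ l₀ := by rintro rfl; exact hcv (hl₀c.symm.trans (hT.snd_path_self v))
  have hadj : G.Adj v c := hl₀c ▸ Walk.adj_snd (Walk.not_nil_of_ne hvl₀)
  have := sum_le_sum fun l (_ : l ∈ L) => hT.dist_add_ite_snd_path_le hadj l
  rw [sum_add_distrib, sum_add_distrib, ← sum_filter, sum_const, sum_const, smul_eq_mul,
    smul_eq_mul] at this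
  omega

end IsTree
end SimpleGraph

/-- Let `T` be a finite unrooted tree with `2 * n` leaves. Then there
exists a vertex `v` of `T` (a *balanced vertex*) and a set of `n` leaf-to-leaf paths,
each containing `v`, whose union covers all vertices of `T`.
(A tree in this context has at least two vertices, so `n ≥ 1`.) -/
theorem balanced_vertex_cover_of_tree {V : Type} [Fintype V] [DecidableEq V]
    (G : SimpleGraph V) [DecidableRel G.Adj] (hT : G.IsTree) (n : ℕ) (hn : 1 ≤ n)
    (hleaves : (Finset.univ.filter fun v => G.degree v = 1).card = 2 * n) :
    ∃ (v : V) (a b : Fin n → V) (p : ∀ i, G.Walk (a i) (b i)),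
      (∀ i, (p i).IsPath) ∧ (∀ i, G.degree (a i) = 1) ∧ (∀ i, G.degree (b i) = 1) ∧
      (∀ i, v ∈ (p i).support) ∧ (∀ w : V, ∃ i, w ∈ (p i).support) := by
  set L : Finset V := univ.filter fun v => G.degree v = 1
  obtain ⟨l₀, hl₀⟩ : L.Nonempty := card_pos.mp (by omega)
  obtain ⟨x, hx, -⟩ := degree_eq_one_iff_existsUnique_adj.mp (mem_filter.mp hl₀).2
  have : Nontrivial V := nontrivial_of_ne l₀ x hx.ne
  obtain ⟨v, -, hv⟩ := exists_min_image univ (fun u => ∑ l ∈ L, G.dist u l) univ_nonempty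
  have hfiber (c : V) : #{l ∈ L | (hT.path v l).snd = c} ≤ n := by
    by_cases hcv : c = v
    · have hsub : {l ∈ L | (hT.path v l).snd = c} ⊆ {v} := fun l hl => by
        by_contra hlv
        exact hT.snd_path_ne (Ne.symm (mem_singleton.not.mp hlv)) ((mem_filter.mp hl).2.trans hcv)
      exact (card_le_card hsub).trans ((card_singleton v).trans_le hn)
    · have := hT.two_mul_card_filter_snd_path_le L hcv (hv c (mem_univ c))
      omega
  obtain ⟨a, b, haL, hbL, hab, hcover⟩ := exists_pairing_of_card_fiber_le L _ hleaves hfiber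
  refine ⟨v, a, b, fun i => (hT.path v (a i)).reverse.append (hT.path v (b i)),
    fun i => hT.isPath_reverse_append_of_snd_ne (hab i), fun i => (mem_filter.mp (haL i)).2,
    fun i => (mem_filter.mp (hbL i)).2, fun i => by simp, fun w => ?_⟩
  obtain ⟨l, hl, hw⟩ := hT.exists_degree_eq_one_mem_support_path v w
  obtain ⟨i, rfl | rfl⟩ := hcover l (by simpa [L] using hl)
  exacts [⟨i, by simp [hw]⟩, ⟨i, by simp [hw]⟩]
end

section
/- Let T be a finite tree with ℓ ≥ 3 leaves where ℓ is odd. Then T can be covered by (ℓ−1)/2 leaf-to-leaf paths plus one additional path that covers one designated leaf-branch: formally, there exists a set of (ℓ+1)/2 paths, each with at least one endpoint a leaf, whose union covers all vertices of T. -/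
/-!
Root the tree at a vertex `r` minimising the total distance to the leaves. Moving the root to a
neighbour `c` brings every leaf whose path from `r` runs through `c` one step closer and every
other leaf at most one step further, so each branch at `r` holds at most half of the `2n + 1`
leaves. The leaves can then be split into `n` pairs lying in different branches and one leftover
leaf. The path joining a pair passes through `r` and contains both root-to-leaf paths, and the
path from the leftover leaf to `r` is the last one; since every vertex lies on a path from `r`
to some leaf, these `n + 1` paths cover the tree.
-/

open Finset

namespace Finset

variable {α β : Type*} [DecidableEq α] [DecidableEq β]

theorem two_mul_card_filter_erase_lt {s : Finset α} (hs : Odd #s) {d : α → β}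
    (hd : ∀ c, 2 * #{x ∈ s | d x = c} ≤ #s + 1) {x₀ : α} (hx₀ : x₀ ∈ s)
    (hmax : ∀ x ∈ s, #{w ∈ s | d w = d x} ≤ #{w ∈ s | d w = d x₀}) (c : β) :
    2 * #{x ∈ s.erase x₀ | d x = c} < #s := by
  obtain ⟨k, hk⟩ := hs
  by_cases hc : d x₀ = c
  · rw [filter_erase, card_erase_of_mem (mem_filter.mpr ⟨hx₀, hc⟩)]
    have := hd c
    omega
  have hle : #{x ∈ s.erase x₀ | d x = c} ≤ #{x ∈ s | d x = c} :=
    card_le_card (filter_subset_filter _ (erase_subset _ _))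
  obtain ⟨w, hw⟩ | hempty := (s.filter (d · = c)).eq_empty_or_nonempty.symm
  · obtain ⟨hws, rfl⟩ := mem_filter.mp hw
    have hdisj : #{x ∈ s | d x = d w} ≤ #{x ∈ s | ¬ d x = d x₀} :=
      card_le_card (monotone_filter_right _ fun x _ hx h => hc (h.symm.trans hx))
    have := card_filter_add_card_filter_not (s := s) (fun x => d x = d x₀)
    have := hmax w hws
    omega
  · rw [hempty, card_empty] at hle
    omega

theorem exists_pairing_of_two_mul_card_filter_le (n : ℕ) (s : Finset α) (d : α → β)
    (hs : #s = 2 * n + 1) (hd : ∀ c, 2 * #{x ∈ s | d x = c} ≤ #s + 1) :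
    ∃ (x y : Fin n → α) (z : α), z ∈ s ∧ (∀ i, x i ∈ s) ∧ (∀ i, y i ∈ s) ∧
      (∀ i, d (x i) ≠ d (y i)) ∧ ∀ w ∈ s, w = z ∨ ∃ i, w = x i ∨ w = y i := by
  induction n generalizing s with
  | zero =>
    obtain ⟨z, rfl⟩ := card_eq_one.mp hs
    exact ⟨Fin.elim0, Fin.elim0, z, mem_singleton_self z, fun i => i.elim0, fun i => i.elim0,
      fun i => i.elim0, fun w hw => .inl (mem_singleton.mp hw)⟩
  | succ n ih =>
    obtain ⟨x₀, hx₀, hmax⟩ :=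
      s.exists_max_image (fun x => #{w ∈ s | d w = d x}) (card_pos.mp (by omega))
    obtain ⟨y₀, hy₀, hdy₀⟩ : ∃ y₀ ∈ s, d y₀ ≠ d x₀ := by
      by_contra! h
      have := hd (d x₀)
      rw [filter_true_of_mem h] at this
      omega
    have ht : #((s.erase x₀).erase y₀) = 2 * n + 1 := by
      rw [card_erase_of_mem (mem_erase.mpr ⟨fun h => hdy₀ (congrArg d h), hy₀⟩),
        card_erase_of_mem hx₀]
      omega
    have htd (c : β) :
        2 * #{x ∈ (s.erase x₀).erase y₀ | d x = c} ≤ #((s.erase x₀).erase y₀) + 1 := by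
      have := card_le_card (filter_subset_filter (d · = c) (erase_subset y₀ (s.erase x₀)))
      have := two_mul_card_filter_erase_lt ⟨n + 1, hs⟩ hd hx₀ hmax c
      omega
    obtain ⟨x, y, z, hz, hx, hy, hxy, hcover⟩ := ih _ ht htd
    have hts : (s.erase x₀).erase y₀ ⊆ s := (erase_subset _ _).trans (erase_subset _ _)
    refine ⟨Fin.cons x₀ x, Fin.cons y₀ y, z, hts hz, Fin.cases hx₀ (fun i => hts (hx i)),
      Fin.cases hy₀ (fun i => hts (hy i)), Fin.cases hdy₀.symm hxy, fun w hw => ?_⟩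
    by_cases hwx : w = x₀
    · exact .inr ⟨0, .inl hwx⟩
    by_cases hwy : w = y₀
    · exact .inr ⟨0, .inr hwy⟩
    obtain rfl | ⟨i, h⟩ := hcover w (mem_erase.mpr ⟨hwy, mem_erase.mpr ⟨hwx, hw⟩⟩)
    · exact .inl rfl
    · exact .inr ⟨i.succ, by simpa using h⟩

end Finset

namespace SimpleGraph

variable {V : Type*} {G : SimpleGraph V}

theorem Walk.not_nil_of_snd_ne {u v : V} {p : G.Walk u v} (h : p.snd ≠ u) : ¬ p.Nil := by
  cases p with
  | nil => simp at h
  | cons => simp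

theorem Walk.IsPath.reverse_append {r a b : V} {p : G.Walk r a} {q : G.Walk r b}
    (hp : p.IsPath) (hq : q.IsPath) (h : ∀ x ∈ p.support, x ∈ q.support → x = r) :
    (p.reverse.append q).IsPath := by
  rw [Walk.isPath_def, Walk.support_append, Walk.support_reverse, List.nodup_append]
  refine ⟨List.nodup_reverse.mpr hp.support_nodup, hq.support_nodup.sublist (List.tail_sublist _),
    fun x hxp y hyq hxy => ?_⟩
  subst hxy
  have hnodup := hq.support_nodup
  rw [← q.cons_tail_support, List.nodup_cons] at hnodup
  exact hnodup.1 (h x (List.mem_reverse.mp hxp) (List.mem_of_mem_tail hyq) ▸ hyq)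

theorem IsAcyclic.length_eq_dist (hG : G.IsAcyclic) {u v : V} {p : G.Walk u v} (hp : p.IsPath) :
    p.length = G.dist u v := by
  obtain ⟨q, hq, hlen⟩ := p.reachable.exists_path_of_dist
  rw [← hlen, Subtype.mk.inj <| (hG.subsingleton_path u v).elim ⟨p, hp⟩ ⟨q, hq⟩]

theorem IsAcyclic.dist_snd_lt (hG : G.IsAcyclic) {u v : V} {p : G.Walk u v} (hp : p.IsPath)
    (hnil : ¬ p.Nil) : G.dist p.snd v < G.dist u v := by
  rw [← hG.length_eq_dist hp, ← p.length_tail_add_one hnil]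
  exact Nat.lt_succ_of_le (dist_le _)

theorem IsAcyclic.eq_of_mem_support_of_snd_ne [DecidableEq V] (hG : G.IsAcyclic) {r a b x : V}
    {p : G.Walk r a} {q : G.Walk r b} (hp : p.IsPath) (hq : q.IsPath) (hpq : p.snd ≠ q.snd)
    (hxp : x ∈ p.support) (hxq : x ∈ q.support) : x = r := by
  by_contra hxr
  have := Subtype.mk.inj <| (hG.subsingleton_path r x).elim
    ⟨_, hp.takeUntil hxp⟩ ⟨_, hq.takeUntil hxq⟩
  rw [← p.snd_takeUntil hxr hxp, ← q.snd_takeUntil hxr hxq, this] at hpq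
  exact hpq rfl

theorem IsAcyclic.exists_isPath_append_degree_eq_one [Fintype V] [DecidableRel G.Adj]
    (hG : G.IsAcyclic) (hdeg : ∀ x, G.degree x ≠ 0) {u v : V} (p : G.Walk u v) (hp : p.IsPath) :
    ∃ (w : V) (q : G.Walk v w), (p.append q).IsPath ∧ G.degree w = 1 := by
  by_cases hv : G.degree v = 1
  · exact ⟨v, .nil, by rwa [Walk.append_nil], hv⟩
  obtain ⟨y, hy, hyne⟩ : ∃ y ∈ G.neighborFinset v, y ≠ p.reverse.snd :=
    exists_mem_ne (by rw [card_neighborFinset_eq_degree]; have := hdeg v; omega) _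
  have hadj : G.Adj v y := (mem_neighborFinset _ _ _).mp hy
  have hyp : y ∉ p.support := fun hyp =>
    hyne (hG.eq_snd_of_adj_start hp.reverse hadj (by simpa using hyp))
  obtain ⟨w, q, hq, hw⟩ :=
    IsAcyclic.exists_isPath_append_degree_eq_one hG hdeg (p.concat hadj) (hp.concat hyp hadj)
  exact ⟨w, .cons hadj q, by rwa [← Walk.concat_append], hw⟩
termination_by Fintype.card V - p.length
decreasing_by
  have := (hp.concat hyp hadj).length_lt
  rw [Walk.length_concat] at this ⊢
  omega

theorem IsAcyclic.exists_degree_eq_one_mem_support [Fintype V] [DecidableRel G.Adj]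
    (hG : G.IsAcyclic) (hdeg : ∀ x, G.degree x ≠ 0) {r : V} (P : ∀ w, G.Walk r w)
    (hP : ∀ w, (P w).IsPath) (v : V) : ∃ w, G.degree w = 1 ∧ v ∈ (P w).support := by
  obtain ⟨w, q, hq, hw⟩ := hG.exists_isPath_append_degree_eq_one hdeg (P v) (hP v)
  refine ⟨w, hw, ?_⟩
  rw [← Subtype.mk.inj <| (hG.subsingleton_path r w).elim ⟨_, hq⟩ ⟨_, hP w⟩]
  exact (Walk.mem_support_append_iff _ _).mpr (.inl (P v).end_mem_support)

theorem IsAcyclic.exists_isPath_cover_of_snd_ne [Fintype V] [DecidableEq V] [DecidableRel G.Adj]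
    (hG : G.IsAcyclic) (hdeg : ∀ x, G.degree x ≠ 0) {r : V} (P : ∀ w, G.Walk r w)
    (hP : ∀ w, (P w).IsPath) {n : ℕ} {x y : Fin n → V} {z : V}
    (hxy : ∀ i, (P (x i)).snd ≠ (P (y i)).snd)
    (hcover : ∀ w, G.degree w = 1 → w = z ∨ ∃ i, w = x i ∨ w = y i) :
    ∃ (a b : Fin (n + 1) → V) (p : ∀ i, G.Walk (a i) (b i)), (∀ i, (p i).IsPath) ∧
      (∀ i, a i = z ∨ ∃ j, a i = x j) ∧ ∀ v, ∃ i, v ∈ (p i).support := by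
  refine ⟨Fin.snoc x z, Fin.snoc y r, fun i => (P _).reverse.append (P _),
    fun i => (hP _).reverse_append (hP _) ?_, Fin.lastCases (by simp) (by simp), fun v => ?_⟩
  · induction i using Fin.lastCases with
    | last =>
      rw [Fin.snoc_last, Fin.snoc_last, (Walk.isPath_iff_nil.mp (hP r)).eq_nil]
      simp
    | cast j =>
      rw [Fin.snoc_castSucc, Fin.snoc_castSucc]
      exact fun u => hG.eq_of_mem_support_of_snd_ne (hP _) (hP _) (hxy j)
  · obtain ⟨w, hw, hv⟩ := hG.exists_degree_eq_one_mem_support hdeg P hP v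
    rcases hcover w hw with rfl | ⟨i, rfl | rfl⟩
    · refine ⟨Fin.last n, (Walk.mem_support_append_iff _ _).mpr (.inl ?_)⟩
      rwa [Walk.support_reverse, List.mem_reverse, Fin.snoc_last]
    · refine ⟨i.castSucc, (Walk.mem_support_append_iff _ _).mpr (.inl ?_)⟩
      rwa [Walk.support_reverse, List.mem_reverse, Fin.snoc_castSucc]
    · refine ⟨i.castSucc, (Walk.mem_support_append_iff _ _).mpr (.inr ?_)⟩
      rwa [Fin.snoc_castSucc]

theorem Connected.two_mul_card_closer_le_of_forall_sum_dist_le (hG : G.Connected) (s : Finset V)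
    {r c : V} (hr : ∀ u, ∑ w ∈ s, G.dist r w ≤ ∑ w ∈ s, G.dist u w) (hrc : G.Adj r c) :
    2 * #{w ∈ s | G.dist c w < G.dist r w} ≤ #s := by
  set B := {w ∈ s | G.dist c w < G.dist r w}
  set C := {w ∈ s | ¬ G.dist c w < G.dist r w}
  have hB : ∑ w ∈ B, G.dist c w + #B ≤ ∑ w ∈ B, G.dist r w := by
    rw [card_eq_sum_ones, ← sum_add_distrib]
    exact sum_le_sum fun w hw => (mem_filter.mp hw).2
  have hC : ∑ w ∈ C, G.dist c w ≤ ∑ w ∈ C, G.dist r w + #C := by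
    rw [card_eq_sum_ones, ← sum_add_distrib]
    refine sum_le_sum fun w _ => ?_
    have := hG.dist_triangle (u := c) (v := r) (w := w)
    rwa [dist_eq_one_iff_adj.mpr hrc.symm, add_comm] at this
  have hsumr : ∑ w ∈ B, G.dist r w + ∑ w ∈ C, G.dist r w = ∑ w ∈ s, G.dist r w :=
    sum_filter_add_sum_filter_not _ _ _
  have hsumc : ∑ w ∈ B, G.dist c w + ∑ w ∈ C, G.dist c w = ∑ w ∈ s, G.dist c w :=
    sum_filter_add_sum_filter_not _ _ _
  have hcard : #B + #C = #s := card_filter_add_card_filter_not _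
  have := hr c
  omega

theorem IsTree.two_mul_card_filter_snd_le [DecidableEq V] (hG : G.IsTree) (s : Finset V) {r : V}
    (hr : ∀ u, ∑ w ∈ s, G.dist r w ≤ ∑ w ∈ s, G.dist u w) (P : ∀ w, G.Walk r w)
    (hP : ∀ w, (P w).IsPath) (c : V) : 2 * #{w ∈ s | (P w).snd = c} ≤ #s + 1 := by
  obtain ⟨w, hw⟩ | hempty := (s.filter fun w => (P w).snd = c).eq_empty_or_nonempty.symm
  swap
  · simp [hempty]
  obtain ⟨-, hwc⟩ := mem_filter.mp hw
  by_cases hc : c = r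
  · subst hc
    -- only the trivial walk has `snd = r`
    have hcr : ∀ a ∈ s.filter fun w => (P w).snd = c, a = c := fun a ha =>
      (not_not.mp fun h => ((P a).adj_snd h).ne (mem_filter.mp ha).2.symm).eq.symm
    have := card_le_one.mpr fun a ha b hb => (hcr a ha).trans (hcr b hb).symm
    have := card_le_card (filter_subset (fun w => (P w).snd = c) s)
    omega
  · have hrc : G.Adj r c := hwc ▸ (P w).adj_snd (Walk.not_nil_of_snd_ne (hwc ▸ hc))
    calc 2 * #{w ∈ s | (P w).snd = c}
        ≤ 2 * #{w ∈ s | G.dist c w < G.dist r w} := by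
          gcongr with w' _
          intro hsnd
          rw [← hsnd]
          exact hG.isAcyclic.dist_snd_lt (hP w') (Walk.not_nil_of_snd_ne (hsnd ▸ hc))
      _ ≤ #s := hG.connected.two_mul_card_closer_le_of_forall_sum_dist_le s hr hrc
      _ ≤ #s + 1 := Nat.le_succ _

end SimpleGraph

open Finset SimpleGraph

/-- Let `T` be a finite tree with `ℓ ≥ 3` leaves, `ℓ` odd. Then `T`
can be covered by `(ℓ-1)/2` leaf-to-leaf paths plus one additional path that covers one
designated leaf-branch: there is a set of `(ℓ+1)/2` paths, each with at least one
endpoint a leaf, whose union covers all vertices of `T`. -/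
theorem odd_leaf_cover_of_tree {V : Type} [Fintype V] [DecidableEq V]
    (G : SimpleGraph V) [DecidableRel G.Adj] (hT : G.IsTree)
    (ℓ : ℕ) (hodd : Odd ℓ) (h3 : 3 ≤ ℓ)
    (hleaves : (Finset.univ.filter fun v => G.degree v = 1).card = ℓ) :
    ∃ (a b : Fin ((ℓ + 1) / 2) → V) (p : ∀ i, G.Walk (a i) (b i)),
      (∀ i, (p i).IsPath) ∧ (∀ i, G.degree (a i) = 1) ∧
      (∀ v : V, ∃ i, v ∈ (p i).support) := by
  obtain ⟨n, rfl⟩ := hodd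
  rw [show (2 * n + 1 + 1) / 2 = n + 1 by omega]
  set S := univ.filter fun v => G.degree v = 1
  have : Nontrivial V :=
    Fintype.one_lt_card_iff_nontrivial.mp (by have := card_le_univ S; omega)
  have hdeg (x : V) : G.degree x ≠ 0 := (hT.connected.preconnected.degree_pos_of_nontrivial x).ne'
  obtain ⟨r, -, hr⟩ := univ.exists_min_image (fun u => ∑ w ∈ S, G.dist u w) univ_nonempty
  choose P hP using hT.connected.exists_isPath r
  obtain ⟨x, y, z, hz, hx, -, hxy, hcover⟩ :=
    exists_pairing_of_two_mul_card_filter_le n S (fun w => (P w).snd) hleaves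
      (hT.two_mul_card_filter_snd_le S (fun u => hr u (mem_univ u)) P hP)
  obtain ⟨a, b, p, hp, ha, hcover⟩ := hT.isAcyclic.exists_isPath_cover_of_snd_ne hdeg P hP hxy
    fun w hw => hcover w (by simpa [S] using hw)
  refine ⟨a, b, p, hp, fun i => ?_, hcover⟩
  obtain h | ⟨j, h⟩ := ha i <;> rw [h]
  · simpa [S] using hz
  · simpa [S] using hx j
end

section
/- If a tagged component tree T has three pairwise disjoint nonempty partition subtrees S1, S2, S3 that are pairwise separated (fully separated configuration), then the union of the unique S1–S2 connecting path and the unique S1–S3 connecting path covers all bad nodes lying on any of the three pairwise connecting paths (i.e., all bad links). -/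
/-!
The path `p23` is the unique path between its ends in the tree, so it lies on every walk between
them, in particular on the walk that goes through `S2` to `b12`, back along `p12` to `a12`,
through `S1` to `a13`, along `p13` to `b13` and through `S3` to `b23`. A vertex of that walk
outside the three subtrees lies on `p12` or on `p13`.
-/

namespace SimpleGraph

variable {V : Type*} {G : SimpleGraph V}

lemma Preconnected.exists_walk_support_subset {s : Set V} (hs : (G.induce s).Preconnected)
    {x y : V} (hx : x ∈ s) (hy : y ∈ s) : ∃ w : G.Walk x y, ∀ v ∈ w.support, v ∈ s := by
  obtain ⟨w⟩ := hs ⟨x, hx⟩ ⟨y, hy⟩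
  refine ⟨w.map (Embedding.induce s).toHom, fun v hv => ?_⟩
  obtain ⟨⟨u, hu⟩, -, rfl⟩ := List.mem_map.mp (Walk.support_map _ w ▸ hv)
  exact hu

lemma IsAcyclic.support_subset_of_isPath (hG : G.IsAcyclic) {u v : V} {p : G.Walk u v}
    (hp : p.IsPath) (q : G.Walk u v) : p.support ⊆ q.support := by
  classical
  have hpq : p = q.bypass :=
    congrArg Subtype.val ((hG.subsingleton_path u v).elim ⟨p, hp⟩ ⟨_, q.bypass_isPath⟩)
  exact hpq ▸ q.support_bypass_subset_support

end SimpleGraph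

theorem two_links_cover_three_separated_subtrees_general {V : Type}
    (G : SimpleGraph V) (hT : G.IsTree) (bad : V → Prop)
    (S1 S2 S3 : Set V)
    (hc1 : (G.induce S1).Connected) (hc2 : (G.induce S2).Connected)
    (hc3 : (G.induce S3).Connected)
    {a12 b12 a13 b13 a23 b23 : V}
    (p12 : G.Walk a12 b12) (p13 : G.Walk a13 b13) (p23 : G.Walk a23 b23)
    (h12 : p12.IsPath ∧ a12 ∈ S1 ∧ b12 ∈ S2 ∧
      ∀ v ∈ p12.support, v ∈ S1 ∪ S2 → v = a12 ∨ v = b12)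
    (h13 : p13.IsPath ∧ a13 ∈ S1 ∧ b13 ∈ S3 ∧
      ∀ v ∈ p13.support, v ∈ S1 ∪ S3 → v = a13 ∨ v = b13)
    (h23 : p23.IsPath ∧ a23 ∈ S2 ∧ b23 ∈ S3 ∧
      ∀ v ∈ p23.support, v ∈ S2 ∪ S3 → v = a23 ∨ v = b23) :
    ∀ v, bad v → v ∈ p23.support → v ∉ S1 ∪ S2 ∪ S3 →
      v ∈ p12.support ∨ v ∈ p13.support := by
  intro v _ hv hvS
  simp only [Set.mem_union, not_or] at hvS
  obtain ⟨⟨hv1, hv2⟩, hv3⟩ := hvS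
  obtain ⟨σ2, hσ2⟩ := hc2.preconnected.exists_walk_support_subset h23.2.1 h12.2.2.1
  obtain ⟨σ1, hσ1⟩ := hc1.preconnected.exists_walk_support_subset h12.2.1 h13.2.1
  obtain ⟨σ3, hσ3⟩ := hc3.preconnected.exists_walk_support_subset h13.2.2.1 h23.2.2.1
  have hvW := hT.isAcyclic.support_subset_of_isPath h23.1
    (σ2.append (p12.reverse.append (σ1.append (p13.append σ3)))) hv
  simp only [SimpleGraph.Walk.mem_support_append_iff, SimpleGraph.Walk.support_reverse,
    List.mem_reverse] at hvW
  rcases hvW with h | h | h | h | h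
  · exact absurd (hσ2 v h) hv2
  · exact Or.inl h
  · exact absurd (hσ1 v h) hv1
  · exact Or.inr h
  · exact absurd (hσ3 v h) hv3

/-- Let `T` be a tree containing three pairwise disjoint nonempty
connected subtrees `S1`, `S2`, `S3` which are pairwise separated (each pair is
connected by a *bad link*, i.e. the connecting path between them contains a bad node).
A connecting path (link) between two of the subtrees is a path whose endpoints lie in
the two subtrees and which meets the two subtrees only in its endpoints.  Then the
union of the `S1`–`S2` link and the `S1`–`S3` link covers all bad nodes lying on any of
the three pairwise links (the bad nodes of a link being those outside the subtrees). -/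
theorem two_links_cover_three_separated_subtrees {V : Type} [Fintype V] [DecidableEq V]
    (G : SimpleGraph V) [DecidableRel G.Adj] (hT : G.IsTree) (bad : V → Prop)
    (S1 S2 S3 : Set V)
    (hne1 : S1.Nonempty) (hne2 : S2.Nonempty) (hne3 : S3.Nonempty)
    (hc1 : (G.induce S1).Connected) (hc2 : (G.induce S2).Connected)
    (hc3 : (G.induce S3).Connected)
    (hd12 : Disjoint S1 S2) (hd13 : Disjoint S1 S3) (hd23 : Disjoint S2 S3)
    {a12 b12 a13 b13 a23 b23 : V}
    (p12 : G.Walk a12 b12) (p13 : G.Walk a13 b13) (p23 : G.Walk a23 b23)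
    (h12 : p12.IsPath ∧ a12 ∈ S1 ∧ b12 ∈ S2 ∧
      ∀ v ∈ p12.support, v ∈ S1 ∪ S2 → v = a12 ∨ v = b12)
    (h13 : p13.IsPath ∧ a13 ∈ S1 ∧ b13 ∈ S3 ∧
      ∀ v ∈ p13.support, v ∈ S1 ∪ S3 → v = a13 ∨ v = b13)
    (h23 : p23.IsPath ∧ a23 ∈ S2 ∧ b23 ∈ S3 ∧
      ∀ v ∈ p23.support, v ∈ S2 ∪ S3 → v = a23 ∨ v = b23)
    -- pairwise separated: each link contains a bad node
    (hb12 : ∃ v ∈ p12.support, bad v) (hb13 : ∃ v ∈ p13.support, bad v)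
    (hb23 : ∃ v ∈ p23.support, bad v) :
    ∀ v, bad v → v ∈ p23.support → v ∉ S1 ∪ S2 ∪ S3 →
      v ∈ p12.support ∨ v ∈ p13.support :=
  two_links_cover_three_separated_subtrees_general G hT bad S1 S2 S3 hc1 hc2 hc3 p12 p13 p23 h12 h13
    h23
end

section
/- Let T be a tree with four pairwise disjoint nonempty subtrees S1, S2, S3, S4 such that the subtree spanned by S1 ∪ S2 is disjoint from the subtree spanned by S3 ∪ S4. Then the union of the unique connecting path between S1 and S3 and the unique connecting path between S2 and S4 contains the connecting path between any pair among S1, S2, S3, S4 intersected with the bad links; in particular these two 'crossing' paths cover all vertices lying on any pairwise connecting path between the four subtrees. -/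
/-!
Fix a vertex `v` lying outside the four subtrees and call two vertices `v`-linked when some walk
joins them while avoiding `v`; this relation is symmetric and transitive. If `v` lies on a
connecting path between `S i` and `S j`, then, the tree being acyclic and the subtrees connected,
`v` separates every vertex of `S i` from every vertex of `S j`. If `v` missed both crossing paths,
their endpoints would be `v`-linked crosswise, and the separation hypothesis links the endpoints in
`S 0` and `S 1`, or those in `S 2` and `S 3`; by transitivity all four endpoints would then be
`v`-linked, a contradiction.
-/

namespace SimpleGraph

variable {V : Type} {G : SimpleGraph V}

def ReachableAvoiding (G : SimpleGraph V) (v x y : V) : Prop :=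
  ∃ W : G.Walk x y, v ∉ W.support

namespace ReachableAvoiding

variable {v x y z : V}

theorem symm (h : G.ReachableAvoiding v x y) : G.ReachableAvoiding v y x := by
  obtain ⟨W, hW⟩ := h
  exact ⟨W.reverse, by simpa using hW⟩

theorem trans (hxy : G.ReachableAvoiding v x y) (hyz : G.ReachableAvoiding v y z) :
    G.ReachableAvoiding v x z := by
  obtain ⟨W₁, hW₁⟩ := hxy
  obtain ⟨W₂, hW₂⟩ := hyz
  exact ⟨W₁.append W₂, by simp [Walk.mem_support_append_iff, hW₁, hW₂]⟩

theorem of_induce_connected {s : Set V} (hs : (G.induce s).Connected) (hx : x ∈ s) (hy : y ∈ s)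
    (hv : v ∉ s) : G.ReachableAvoiding v x y := by
  obtain ⟨W⟩ := hs ⟨x, hx⟩ ⟨y, hy⟩
  refine ⟨W.map (Embedding.induce s).toHom, fun hmem => hv ?_⟩
  obtain ⟨u, -, rfl⟩ := List.mem_map.mp (Walk.support_map _ W ▸ hmem)
  exact u.2

theorem of_crossing {x : Fin 4 → V} (h02 : G.ReachableAvoiding v (x 0) (x 2))
    (h13 : G.ReachableAvoiding v (x 1) (x 3))
    (h : G.ReachableAvoiding v (x 0) (x 1) ∨ G.ReachableAvoiding v (x 2) (x 3)) (i j : Fin 4) :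
    G.ReachableAvoiding v (x i) (x j) := by
  have h01 : G.ReachableAvoiding v (x 0) (x 1) :=
    h.elim id fun h23 => (h02.trans h23).trans h13.symm
  have from0 : ∀ k, G.ReachableAvoiding v (x 0) (x k) := by
    intro k
    fin_cases k
    exacts [h01.trans h01.symm, h01, h02, h01.trans h13]
  exact (from0 i).symm.trans (from0 j)

end ReachableAvoiding

theorem IsAcyclic.mem_support_of_isPath (hG : G.IsAcyclic) {x y : V} {p : G.Walk x y}
    (hp : p.IsPath) (W : G.Walk x y) {v : V} (hv : v ∈ p.support) : v ∈ W.support := by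
  classical
  have : p = W.bypass :=
    congrArg Subtype.val ((hG.subsingleton_path x y).elim ⟨p, hp⟩ ⟨W.bypass, W.bypass_isPath⟩)
  exact W.support_bypass_subset_support (this ▸ hv)

theorem IsAcyclic.not_reachableAvoiding_of_mem_support (hG : G.IsAcyclic) {x y v : V}
    {p : G.Walk x y} (hp : p.IsPath) (hv : v ∈ p.support) : ¬G.ReachableAvoiding v x y :=
  fun ⟨W, hW⟩ => hW (hG.mem_support_of_isPath hp W hv)

theorem IsAcyclic.not_reachableAvoiding_of_mem_support_of_induce_connected (hG : G.IsAcyclic)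
    {s t : Set V} (hs : (G.induce s).Connected) (ht : (G.induce t).Connected)
    {a b x y v : V} (ha : a ∈ s) (hb : b ∈ t) (hx : x ∈ s) (hy : y ∈ t)
    {q : G.Walk a b} (hq : q.IsPath) (hv : v ∈ q.support) (hvs : v ∉ s) (hvt : v ∉ t) :
    ¬G.ReachableAvoiding v x y := fun hxy =>
  hG.not_reachableAvoiding_of_mem_support hq hv
    (((ReachableAvoiding.of_induce_connected hs ha hx hvs).trans hxy).trans
      (ReachableAvoiding.of_induce_connected ht hy hb hvt))

end SimpleGraph

open SimpleGraph

theorem crossing_links_cover_four_separated_subtrees_general {V : Type}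
    (G : SimpleGraph V) (hT : G.IsTree)
    (S : Fin 4 → Set V)
    (hconn : ∀ i, (G.induce (S i)).Connected)
    (hspan : ∀ (a b c d : V), a ∈ S 0 ∪ S 1 → b ∈ S 0 ∪ S 1 →
      c ∈ S 2 ∪ S 3 → d ∈ S 2 ∪ S 3 →
      ∀ (p : G.Walk a b) (q : G.Walk c d), p.IsPath → q.IsPath →
        ∀ v, v ∈ p.support → v ∉ q.support)
    {a02 b02 a13 b13 : V}
    (p02 : G.Walk a02 b02) (p13 : G.Walk a13 b13)
    (h02 : p02.IsPath ∧ a02 ∈ S 0 ∧ b02 ∈ S 2 ∧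
      ∀ v ∈ p02.support, v ∈ S 0 ∪ S 2 → v = a02 ∨ v = b02)
    (h13 : p13.IsPath ∧ a13 ∈ S 1 ∧ b13 ∈ S 3 ∧
      ∀ v ∈ p13.support, v ∈ S 1 ∪ S 3 → v = a13 ∨ v = b13) :
    ∀ (i j : Fin 4), i ≠ j → ∀ {a b : V} (q : G.Walk a b), q.IsPath →
      a ∈ S i → b ∈ S j → (∀ v ∈ q.support, v ∈ S i ∪ S j → v = a ∨ v = b) →
      ∀ v ∈ q.support, v ∉ S 0 ∪ S 1 ∪ S 2 ∪ S 3 →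
        v ∈ p02.support ∨ v ∈ p13.support := by
  obtain ⟨-, ha02, hb02, -⟩ := h02
  obtain ⟨-, ha13, hb13, -⟩ := h13
  intro i j _ a b q hq ha hb _ v hv hvS
  let x : Fin 4 → V := ![a02, a13, b02, b13]
  have hx : ∀ k, x k ∈ S k := by
    intro k
    fin_cases k
    exacts [ha02, ha13, hb02, hb13]
  simp only [Set.mem_union, not_or] at hvS
  have hvout : ∀ k, v ∉ S k := by
    intro k
    fin_cases k
    exacts [hvS.1.1.1, hvS.1.1.2, hvS.1.2, hvS.2]
  have hsep : ¬G.ReachableAvoiding v (x i) (x j) :=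
    hT.isAcyclic.not_reachableAvoiding_of_mem_support_of_induce_connected (hconn i) (hconn j)
      ha hb (hx i) (hx j) hq hv (hvout i) (hvout j)
  by_contra! hmiss
  have hlink : G.ReachableAvoiding v (x 0) (x 1) ∨ G.ReachableAvoiding v (x 2) (x 3) := by
    by_contra! hcut
    obtain ⟨p01, hp01⟩ := hT.connected.preconnected.exists_isPath (x 0) (x 1)
    obtain ⟨p23, hp23⟩ := hT.connected.preconnected.exists_isPath (x 2) (x 3)
    have hv01 : v ∈ p01.support := not_not.mp fun h => hcut.1 ⟨p01, h⟩
    have hv23 : v ∈ p23.support := not_not.mp fun h => hcut.2 ⟨p23, h⟩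
    exact hspan _ _ _ _ (.inl ha02) (.inr ha13) (.inl hb02) (.inr hb13) p01 p23 hp01 hp23 v
      hv01 hv23
  exact hsep (ReachableAvoiding.of_crossing ⟨p02, hmiss.1⟩ ⟨p13, hmiss.2⟩ hlink i j)

/-- Let `T` be a tree with four pairwise disjoint nonempty connected
subtrees `S 0, S 1, S 2, S 3` such that the subtree spanned by `S 0 ∪ S 1` is disjoint
from the subtree spanned by `S 2 ∪ S 3` (expressed: any path with both endpoints in
`S 0 ∪ S 1` is vertex-disjoint from any path with both endpoints in `S 2 ∪ S 3`).
Then the union of the "crossing" connecting paths, one between `S 0` and `S 2` and one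
between `S 1` and `S 3`, covers every vertex lying strictly on any pairwise connecting
path between the four subtrees (a connecting path between `S i` and `S j` meets
`S i ∪ S j` only in its endpoints). -/
theorem crossing_links_cover_four_separated_subtrees {V : Type} [Fintype V]
    [DecidableEq V] (G : SimpleGraph V) [DecidableRel G.Adj] (hT : G.IsTree)
    (S : Fin 4 → Set V)
    (hne : ∀ i, (S i).Nonempty) (hconn : ∀ i, (G.induce (S i)).Connected)
    (hdisj : ∀ i j, i ≠ j → Disjoint (S i) (S j))
    (hspan : ∀ (a b c d : V), a ∈ S 0 ∪ S 1 → b ∈ S 0 ∪ S 1 →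
      c ∈ S 2 ∪ S 3 → d ∈ S 2 ∪ S 3 →
      ∀ (p : G.Walk a b) (q : G.Walk c d), p.IsPath → q.IsPath →
        ∀ v, v ∈ p.support → v ∉ q.support)
    {a02 b02 a13 b13 : V}
    (p02 : G.Walk a02 b02) (p13 : G.Walk a13 b13)
    (h02 : p02.IsPath ∧ a02 ∈ S 0 ∧ b02 ∈ S 2 ∧
      ∀ v ∈ p02.support, v ∈ S 0 ∪ S 2 → v = a02 ∨ v = b02)
    (h13 : p13.IsPath ∧ a13 ∈ S 1 ∧ b13 ∈ S 3 ∧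
      ∀ v ∈ p13.support, v ∈ S 1 ∪ S 3 → v = a13 ∨ v = b13) :
    ∀ (i j : Fin 4), i ≠ j → ∀ {a b : V} (q : G.Walk a b), q.IsPath →
      a ∈ S i → b ∈ S j → (∀ v ∈ q.support, v ∈ S i ∪ S j → v = a ∨ v = b) →
      ∀ v ∈ q.support, v ∉ S 0 ∪ S 1 ∪ S 2 ∪ S 3 →
        v ∈ p02.support ∨ v ∈ p13.support :=
  crossing_links_cover_four_separated_subtrees_general G hT S hconn hspan p02 p13 h02 h13
end

section
/- Every even-cost (indel-neutral) path in a cover of a tagged component tree can be extended to a path between two leaves without increasing its cost, so any cover can be transformed into a cover of equal or smaller cost in which every cost-2 path is a leaf-to-leaf traversal. -/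
/-- The cost of a covering path in a tagged component tree: a *short* path (containing
at most one bad node) costs `1`; a *long* path (containing at least two bad nodes)
costs `1` if its two endpoints share a tag (*indel-saving*) and `2` otherwise
(*indel-neutral*). Tags are drawn from a two-element set, modelled by `Bool`. -/
noncomputable def pathCost {V : Type} {G : SimpleGraph V} (bad : V → Prop)
    (tag : V → Finset Bool) {x y : V} (p : G.Walk x y) : ℕ :=
  if 2 ≤ {v | v ∈ p.support ∧ bad v}.ncard then
    (if ((tag x) ∩ (tag y)).Nonempty then 1 else 2)
  else 1

/-- The set of possible total costs of covers of a tagged component tree: a cover is a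
finite family of paths such that every bad node lies on at least one of them. -/
noncomputable def CoverCosts {V : Type} (G : SimpleGraph V) (bad : V → Prop)
    (tag : V → Finset Bool) : Set ℕ :=
  {c | ∃ (k : ℕ) (x y : Fin k → V) (p : ∀ i, G.Walk (x i) (y i)),
    (∀ i, (p i).IsPath) ∧ (∀ v, bad v → ∃ i, v ∈ (p i).support) ∧
    c = ∑ i, pathCost bad tag (p i)}

open SimpleGraph

section Aux
variable {V : Type} [Fintype V] [DecidableEq V] {G : SimpleGraph V} [DecidableRel G.Adj]
set_option linter.unusedSectionVars false

lemma pathCost_le_two (bad : V → Prop) (tag : V → Finset Bool) {x y : V}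
    (p : G.Walk x y) : pathCost bad tag p ≤ 2 := by
  unfold pathCost
  split
  · split <;> omega
  · omega

lemma edge_head_unique {x y z w : V} (p : G.Walk x y) (hp : p.IsPath)
    (h1 : s(x,z) ∈ p.edges) (h2 : s(x,w) ∈ p.edges) : z = w := by
  cases p with
  | nil => simp at h1
  | @cons _ b _ h q =>
    rw [Walk.edges_cons] at h1 h2
    rw [Walk.cons_isPath_iff] at hp
    have f : ∀ u, s(x,u) ∈ q.edges → False := fun u hu =>
      hp.2 (Walk.fst_mem_support_of_mem_edges q hu)
    rcases List.mem_cons.mp h1 with h1 | h1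
    · rcases List.mem_cons.mp h2 with h2 | h2
      · rw [Sym2.congr_right.mp h1, Sym2.congr_right.mp h2]
      · exact absurd h2 (f w)
    · exact absurd h1 (f z)

lemma neighbor_mem_support_edge (hT : G.IsTree) {x y z : V} (p : G.Walk x y)
    (hp : p.IsPath) (hadj : G.Adj x z) (hz : z ∈ p.support) : s(x,z) ∈ p.edges := by
  have hq : (p.takeUntil z hz).IsPath := hp.takeUntil hz
  have hc := hT.IsAcyclic (Walk.cons hadj.symm (p.takeUntil z hz))
  rw [Walk.cons_isCycle_iff] at hc
  have hmem : s(z,x) ∈ (p.takeUntil z hz).edges := by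
    by_contra hne
    exact hc ⟨hq, hne⟩
  rw [Sym2.eq_swap] at hmem
  exact Walk.edges_takeUntil_subset p hz hmem

lemma degree_pos_of_card (hT : G.IsTree) (hcard : 2 ≤ Fintype.card V) (x : V) :
    1 ≤ G.degree x := by
  obtain ⟨w, hw⟩ := Fintype.exists_ne_of_one_lt_card (by omega) x
  obtain ⟨p⟩ := hT.isConnected.preconnected x w
  cases p with
  | nil => exact absurd rfl hw.symm
  | cons h q => exact (G.degree_pos_iff_exists_adj x).mpr ⟨_, h⟩

lemma exists_extend (hT : G.IsTree) {x y : V} (p : G.Walk x y) (hp : p.IsPath)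
    (hx : 2 ≤ G.degree x) : ∃ z, G.Adj z x ∧ z ∉ p.support := by
  have h1 : 1 < (G.neighborFinset x).card := by
    rwa [G.card_neighborFinset_eq_degree]
  obtain ⟨z1, hz1, z2, hz2, hne⟩ := Finset.one_lt_card.mp h1
  rw [mem_neighborFinset] at hz1 hz2
  by_cases h1 : z1 ∈ p.support
  · by_cases h2 : z2 ∈ p.support
    · exact absurd (edge_head_unique p hp (neighbor_mem_support_edge hT p hp hz1 h1)
        (neighbor_mem_support_edge hT p hp hz2 h2)) hne
    · exact ⟨z2, hz2.symm, h2⟩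
  · exact ⟨z1, hz1.symm, h1⟩

lemma extend_to_leaf (hT : G.IsTree) (hcard : 2 ≤ Fintype.card V) :
    ∀ (n : ℕ) {x y : V} (p : G.Walk x y), p.IsPath →
      Fintype.card V ≤ n + p.support.length →
      ∃ (x' : V) (q : G.Walk x' y), q.IsPath ∧ G.degree x' = 1 ∧
        ∀ v ∈ p.support, v ∈ q.support := by
  intro n
  induction n with
  | zero =>
    intro x y p hp hlen
    by_cases hd : G.degree x = 1
    · exact ⟨x, p, hp, hd, fun v hv => hv⟩
    · exfalso
      have hdeg : 2 ≤ G.degree x := by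
        have := degree_pos_of_card hT hcard x; omega
      obtain ⟨z, hadj, hz⟩ := exists_extend hT p hp hdeg
      have hlen2 : p.support.length = p.support.toFinset.card :=
        (List.toFinset_card_of_nodup hp.support_nodup).symm
      have hsub : p.support.toFinset ⊆ Finset.univ.erase z := by
        intro v hv
        rw [List.mem_toFinset] at hv
        exact Finset.mem_erase.mpr ⟨fun h => hz (h ▸ hv), Finset.mem_univ v⟩
      have := Finset.card_le_card hsub
      rw [Finset.card_erase_of_mem (Finset.mem_univ z), Finset.card_univ] at this
      omega
  | succ n ih =>
    intro x y p hp hlen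
    by_cases hd : G.degree x = 1
    · exact ⟨x, p, hp, hd, fun v hv => hv⟩
    · have hdeg : 2 ≤ G.degree x := by
        have := degree_pos_of_card hT hcard x; omega
      obtain ⟨z, hadj, hz⟩ := exists_extend hT p hp hdeg
      have hp' : (Walk.cons hadj p).IsPath := hp.cons hz
      obtain ⟨x', q, hq, hdq, hsub⟩ := ih (Walk.cons hadj p) hp'
        (by rw [Walk.support_cons]; simp only [List.length_cons]; omega)
      exact ⟨x', q, hq, hdq, fun v hv => hsub v (by rw [Walk.support_cons]; exact List.mem_cons_of_mem _ hv)⟩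

lemma extend_both (hT : G.IsTree) (hcard : 2 ≤ Fintype.card V) {x y : V}
    (p : G.Walk x y) (hp : p.IsPath) :
    ∃ (a b : V) (q : G.Walk a b), q.IsPath ∧ G.degree a = 1 ∧ G.degree b = 1 ∧
      ∀ v ∈ p.support, v ∈ q.support := by
  obtain ⟨a, q, hq, hda, hsub⟩ := extend_to_leaf hT hcard (Fintype.card V) p hp
    (Nat.le_add_right _ _)
  obtain ⟨b, r, hr, hdb, hsub2⟩ := extend_to_leaf hT hcard (Fintype.card V) q.reverse
    hq.reverse (Nat.le_add_right _ _)
  refine ⟨b, a, r, hr, hdb, hda, fun v hv => ?_⟩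
  exact hsub2 v (by rw [Walk.support_reverse, List.mem_reverse]; exact hsub v hv)

end Aux

/-- Every indel-neutral (cost-2) path in a cover of a tagged
component tree can be extended to a path between two leaves without increasing its
cost; hence any cover can be transformed into a cover of equal or smaller cost in
which every cost-2 path is a leaf-to-leaf traversal. -/
theorem cover_with_neutral_paths_as_traversals {V : Type} [Fintype V] [DecidableEq V]
    (G : SimpleGraph V) [DecidableRel G.Adj] (hT : G.IsTree)
    (bad : V → Prop) (tag : V → Finset Bool)
    (hleafbad : ∀ v, G.degree v = 1 → bad v) :
    ∀ (k : ℕ) (x y : Fin k → V) (p : ∀ i, G.Walk (x i) (y i)),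
      (∀ i, (p i).IsPath) → (∀ v, bad v → ∃ i, v ∈ (p i).support) →
      ∃ (k' : ℕ) (x' y' : Fin k' → V) (p' : ∀ i, G.Walk (x' i) (y' i)),
        (∀ i, (p' i).IsPath) ∧ (∀ v, bad v → ∃ i, v ∈ (p' i).support) ∧
        (∑ i, pathCost bad tag (p' i)) ≤ (∑ i, pathCost bad tag (p i)) ∧
        (∀ i, pathCost bad tag (p' i) = 2 →
          G.degree (x' i) = 1 ∧ G.degree (y' i) = 1) := by
  intro k x y p hpath hcov
  by_cases hcard : 2 ≤ Fintype.card V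
  · have H : ∀ i, ∃ (a b : V) (w : G.Walk a b), w.IsPath ∧
        (∀ v ∈ (p i).support, v ∈ w.support) ∧
        pathCost bad tag w ≤ pathCost bad tag (p i) ∧
        (pathCost bad tag w = 2 → G.degree a = 1 ∧ G.degree b = 1) := by
      intro i
      by_cases h2 : pathCost bad tag (p i) = 2
      · obtain ⟨a, b, w, hw, hda, hdb, hsub⟩ := extend_both hT hcard (p i) (hpath i)
        exact ⟨a, b, w, hw, hsub, by rw [h2]; exact pathCost_le_two bad tag w,
          fun _ => ⟨hda, hdb⟩⟩
      · exact ⟨x i, y i, p i, hpath i, fun v hv => hv, le_refl _, fun h => absurd h h2⟩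
    choose a b w h1 h2 h3 h4 using H
    refine ⟨k, a, b, w, h1, fun v hv => ?_, Finset.sum_le_sum (fun i _ => h3 i), h4⟩
    obtain ⟨i, hi⟩ := hcov v hv
    exact ⟨i, h2 i v hi⟩
  · refine ⟨k, x, y, p, hpath, hcov, le_refl _, fun i h2 => ?_⟩
    exfalso
    have hle : {v | v ∈ (p i).support ∧ bad v}.ncard ≤ Fintype.card V := by
      have := Set.ncard_le_ncard (Set.subset_univ {v | v ∈ (p i).support ∧ bad v})
        (Set.finite_univ)
      rwa [Set.ncard_univ, Nat.card_eq_fintype_card] at this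
    unfold pathCost at h2
    rw [if_neg (by omega)] at h2
    omega
end
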